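/- arXiv:1912.03550 — 5 statements merged into one kernel-verified Lean document; each statement's English description precedes it below -/
import Mathlib

section
/- Let C, D, M ∈ ℝ^{n×n} with C invertible and M symmetric positive definite. The following are equivalent: (iii) for all x ∈ ℝⁿ and θ ∈ [-1,1], (θCx+Dx)ᵀ(I+θ²M)⁻¹(θCx+Dx) ≤ (Cx)ᵀ(I+M)⁻¹(Cx) + (Dx)ᵀ(I+M)⁻¹(Dx) + 2θ xᵀCᵀ(I+M)⁻¹Dx; and (iv) for all x ∈ ℝⁿ and θ ∈ [-1,1], (θCx+Dx)ᵀ(I+M⁻¹+θ²I+θ²M)⁻¹(θCx+Dx) ≤ (Cx)ᵀ(I+M)⁻¹(Cx). -/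
/-!
With `N θ = 1 + M⁻¹ + θ² (1 + M) = (1 + M) M⁻¹ (1 + θ² M)` one has the resolvent identity
`(1 + θ² M)⁻¹ = (1 + M)⁻¹ + (1 - θ²) N θ⁻¹`. Together with the expansion of `|θ u + v|²_A` for the
symmetric matrix `A = (1 + M)⁻¹`, it turns (iii) at `(x, θ)` into (iv) at `(x, θ)` multiplied by
`1 - θ² ≥ 0`. Hence (iv) implies (iii), and (iii) implies (iv) for `|θ| < 1`; the endpoints
`θ = ±1`, where the factor vanishes, follow by continuity of `θ ↦ N θ⁻¹`.
-/

open Matrix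

theorem Continuous.matrix_inv {X ι K : Type*} [TopologicalSpace X] [Fintype ι] [DecidableEq ι]
    [Field K] [TopologicalSpace K] [IsTopologicalRing K] [ContinuousInv₀ K]
    {A : X → Matrix ι ι K} (hA : Continuous A) (hdet : ∀ x, (A x).det ≠ 0) :
    Continuous fun x => (A x)⁻¹ :=
  continuous_iff_continuousAt.2 fun x =>
    (continuousAt_matrix_inv _ (Ring.inverse_eq_inv' (G₀ := K) ▸ continuousAt_inv₀ (hdet x))).comp
      hA.continuousAt

namespace Matrix

variable {ι R : Type*} [Fintype ι] [CommRing R]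

section Inverse

variable [DecidableEq ι]

lemma one_add_inv_add_smul_one_add_smul_eq_mul {M : Matrix ι ι R} (hM : IsUnit M.det) (t : R) :
    1 + M⁻¹ + t • (1 : Matrix ι ι R) + t • M = (1 + M) * M⁻¹ * (1 + t • M) := by
  simp only [mul_add, add_mul, Matrix.mul_smul, one_mul, mul_one, nonsing_inv_mul M hM,
    mul_nonsing_inv M hM]
  abel

lemma inv_one_add_smul_eq {M : Matrix ι ι R} (hM : IsUnit M.det) (h₁ : IsUnit (1 + M).det)
    {t : R} (ht : IsUnit (1 + t • M).det) :
    (1 + t • M)⁻¹ = (1 + M)⁻¹ + (1 - t) • (1 + M⁻¹ + t • (1 : Matrix ι ι R) + t • M)⁻¹ := by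
  rw [one_add_inv_add_smul_one_add_smul_eq_mul hM, mul_inv_rev, mul_inv_rev,
    nonsing_inv_nonsing_inv M hM, ← mul_assoc]
  refine eq_add_of_sub_eq' ?_
  calc (1 + t • M)⁻¹ - (1 + M)⁻¹
      = (1 + t • M)⁻¹ * ((1 + M) - (1 + t • M)) * (1 + M)⁻¹ := by
        rw [mul_sub, sub_mul, mul_assoc, mul_nonsing_inv _ h₁, mul_one,
          nonsing_inv_mul _ ht, one_mul]
    _ = (1 - t) • ((1 + t • M)⁻¹ * M * (1 + M)⁻¹) := by
        simp only [add_sub_add_left_eq_sub, sub_smul, one_smul, mul_sub, sub_mul, Matrix.mul_smul,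
          Matrix.smul_mul]

end Inverse

lemma IsSymm.dotProduct_mulVec_comm {A : Matrix ι ι R} (hA : A.IsSymm) (u v : ι → R) :
    v ⬝ᵥ A *ᵥ u = u ⬝ᵥ A *ᵥ v := by
  rw [dotProduct_mulVec, ← mulVec_transpose, hA.eq, dotProduct_comm]

lemma IsSymm.dotProduct_mulVec_smul_add {A : Matrix ι ι R} (hA : A.IsSymm) (u v : ι → R) (θ : R) :
    (θ • u + v) ⬝ᵥ A *ᵥ (θ • u + v) =
      u ⬝ᵥ A *ᵥ u + v ⬝ᵥ A *ᵥ v + 2 * θ * (u ⬝ᵥ A *ᵥ v) - (1 - θ ^ 2) * (u ⬝ᵥ A *ᵥ u) := by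
  simp only [mulVec_add, mulVec_smul, add_dotProduct, smul_dotProduct, dotProduct_add,
    dotProduct_smul, smul_eq_mul, hA.dotProduct_mulVec_comm u v]
  ring

end Matrix

namespace Matrix.PosDef

variable {ι : Type*} [DecidableEq ι] {M : Matrix ι ι ℝ}

lemma one_add_smul (hM : M.PosDef) {t : ℝ} (ht : 0 ≤ t) : (1 + t • M).PosDef :=
  PosDef.one.add_posSemidef (hM.posSemidef.smul ht)

variable [Fintype ι]

lemma continuous_inv_one_add_inv_add_sq_smul (hM : M.PosDef) :
    Continuous fun θ : ℝ => (1 + M⁻¹ + θ ^ 2 • (1 : Matrix ι ι ℝ) + θ ^ 2 • M)⁻¹ := by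
  refine Continuous.matrix_inv (by fun_prop) fun θ => ?_
  rw [one_add_inv_add_smul_one_add_smul_eq_mul hM.det_pos.ne'.isUnit, det_mul, det_mul]
  exact (mul_pos (mul_pos (PosDef.one.add hM).det_pos hM.inv.det_pos)
    (hM.one_add_smul (sq_nonneg θ)).det_pos).ne'

lemma dotProduct_inv_one_add_sq_smul_le_iff (hM : M.PosDef) (u v : ι → ℝ) (θ : ℝ) :
    (θ • u + v) ⬝ᵥ (1 + θ ^ 2 • M)⁻¹ *ᵥ (θ • u + v) ≤
        u ⬝ᵥ (1 + M)⁻¹ *ᵥ u + v ⬝ᵥ (1 + M)⁻¹ *ᵥ v + 2 * θ * (u ⬝ᵥ (1 + M)⁻¹ *ᵥ v) ↔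
      (1 - θ ^ 2) * ((θ • u + v) ⬝ᵥ
          (1 + M⁻¹ + θ ^ 2 • (1 : Matrix ι ι ℝ) + θ ^ 2 • M)⁻¹ *ᵥ (θ • u + v)) ≤
        (1 - θ ^ 2) * (u ⬝ᵥ (1 + M)⁻¹ *ᵥ u) := by
  have hsymm : ((1 + M)⁻¹).IsSymm := isHermitian_iff_isSymm.1 (PosDef.one.add hM).inv.isHermitian
  rw [inv_one_add_smul_eq hM.det_pos.ne'.isUnit (PosDef.one.add hM).det_pos.ne'.isUnit
    (hM.one_add_smul (sq_nonneg θ)).det_pos.ne'.isUnit, add_mulVec, dotProduct_add, smul_mulVec,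
    dotProduct_smul, smul_eq_mul, hsymm.dotProduct_mulVec_smul_add]
  constructor <;> intro h <;> linarith

lemma forall_Icc_dotProduct_inv_one_add_sq_smul_le_iff (hM : M.PosDef) (u v : ι → ℝ) :
    (∀ θ ∈ Set.Icc (-1 : ℝ) 1,
      (θ • u + v) ⬝ᵥ (1 + θ ^ 2 • M)⁻¹ *ᵥ (θ • u + v) ≤
        u ⬝ᵥ (1 + M)⁻¹ *ᵥ u + v ⬝ᵥ (1 + M)⁻¹ *ᵥ v + 2 * θ * (u ⬝ᵥ (1 + M)⁻¹ *ᵥ v)) ↔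
    (∀ θ ∈ Set.Icc (-1 : ℝ) 1,
      (θ • u + v) ⬝ᵥ (1 + M⁻¹ + θ ^ 2 • (1 : Matrix ι ι ℝ) + θ ^ 2 • M)⁻¹ *ᵥ (θ • u + v) ≤
        u ⬝ᵥ (1 + M)⁻¹ *ᵥ u) := by
  simp only [hM.dotProduct_inv_one_add_sq_smul_le_iff u v]
  constructor
  · intro h θ hθ
    have hopen : ∀ t ∈ Set.Ioo (-1 : ℝ) 1, (t • u + v) ⬝ᵥ
        (1 + M⁻¹ + t ^ 2 • (1 : Matrix ι ι ℝ) + t ^ 2 • M)⁻¹ *ᵥ (t • u + v) ≤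
          u ⬝ᵥ (1 + M)⁻¹ *ᵥ u := fun t ht =>
      le_of_mul_le_mul_left (h t (Set.Ioo_subset_Icc_self ht)) (by nlinarith [ht.1, ht.2])
    have hclosed : IsClosed {t : ℝ | (t • u + v) ⬝ᵥ
        (1 + M⁻¹ + t ^ 2 • (1 : Matrix ι ι ℝ) + t ^ 2 • M)⁻¹ *ᵥ (t • u + v) ≤
          u ⬝ᵥ (1 + M)⁻¹ *ᵥ u} := by
      have := hM.continuous_inv_one_add_inv_add_sq_smul
      exact isClosed_le (by fun_prop) continuous_const
    rw [← closure_Ioo (by norm_num : (-1 : ℝ) ≠ 1)] at hθ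
    exact hclosed.closure_subset_iff.2 hopen hθ
  · intro h θ hθ
    exact mul_le_mul_of_nonneg_left (h θ hθ) (by nlinarith [hθ.1, hθ.2])

end Matrix.PosDef

theorem stmt1_general {n : ℕ} (C D M : Matrix (Fin n) (Fin n) ℝ)
    (hM : M.PosDef) :
    (∀ (x : Fin n → ℝ) (θ : ℝ), θ ∈ Set.Icc (-1 : ℝ) 1 →
      (θ • (C *ᵥ x) + D *ᵥ x) ⬝ᵥ (1 + θ ^ 2 • M)⁻¹ *ᵥ (θ • (C *ᵥ x) + D *ᵥ x) ≤
        (C *ᵥ x) ⬝ᵥ (1 + M)⁻¹ *ᵥ (C *ᵥ x) + (D *ᵥ x) ⬝ᵥ (1 + M)⁻¹ *ᵥ (D *ᵥ x)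
          + 2 * θ * ((C *ᵥ x) ⬝ᵥ (1 + M)⁻¹ *ᵥ (D *ᵥ x))) ↔
    (∀ (x : Fin n → ℝ) (θ : ℝ), θ ∈ Set.Icc (-1 : ℝ) 1 →
      (θ • (C *ᵥ x) + D *ᵥ x) ⬝ᵥ
          (1 + M⁻¹ + θ ^ 2 • (1 : Matrix (Fin n) (Fin n) ℝ) + θ ^ 2 • M)⁻¹ *ᵥ
          (θ • (C *ᵥ x) + D *ᵥ x) ≤
        (C *ᵥ x) ⬝ᵥ (1 + M)⁻¹ *ᵥ (C *ᵥ x)) :=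
  forall_congr' fun x => hM.forall_Icc_dotProduct_inv_one_add_sq_smul_le_iff (C *ᵥ x) (D *ᵥ x)

/-- Equivalence of conditions (iii) and (iv) in Lemma 4 of the paper. -/
theorem stmt1 {n : ℕ} (C D M : Matrix (Fin n) (Fin n) ℝ)
    (hC : IsUnit C.det) (hM : M.PosDef) :
    (∀ (x : Fin n → ℝ) (θ : ℝ), θ ∈ Set.Icc (-1 : ℝ) 1 →
      (θ • (C *ᵥ x) + D *ᵥ x) ⬝ᵥ (1 + θ ^ 2 • M)⁻¹ *ᵥ (θ • (C *ᵥ x) + D *ᵥ x) ≤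
        (C *ᵥ x) ⬝ᵥ (1 + M)⁻¹ *ᵥ (C *ᵥ x) + (D *ᵥ x) ⬝ᵥ (1 + M)⁻¹ *ᵥ (D *ᵥ x)
          + 2 * θ * ((C *ᵥ x) ⬝ᵥ (1 + M)⁻¹ *ᵥ (D *ᵥ x))) ↔
    (∀ (x : Fin n → ℝ) (θ : ℝ), θ ∈ Set.Icc (-1 : ℝ) 1 →
      (θ • (C *ᵥ x) + D *ᵥ x) ⬝ᵥ
          (1 + M⁻¹ + θ ^ 2 • (1 : Matrix (Fin n) (Fin n) ℝ) + θ ^ 2 • M)⁻¹ *ᵥ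
          (θ • (C *ᵥ x) + D *ᵥ x) ≤
        (C *ᵥ x) ⬝ᵥ (1 + M)⁻¹ *ᵥ (C *ᵥ x)) :=
  stmt1_general C D M hM
end

section
/- Let C, D, M ∈ ℝ^{n×n} with C invertible and M symmetric positive definite. Then for all x ∈ ℝⁿ and all θ ∈ [-1,1] the inequality (θCx+Dx)ᵀ(I+M⁻¹+θ²I+θ²M)⁻¹(θCx+Dx) ≤ (Cx)ᵀ(I+M)⁻¹(Cx) holds if and only if both matrices 2I + M⁻¹ + M − (I ± DC⁻¹)(I+M)(I ± DC⁻¹)ᵀ (with '+' and with '−') are positive semidefinite. -/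
/-!
Substituting `y = C x`, the inequality for a fixed `θ` says that the quadratic form of
`Fᵀ A⁻¹ F` is dominated by that of `B⁻¹`, where `F = θ • 1 + D C⁻¹`,
`A = 1 + M⁻¹ + θ² (1 + M)` and `B = 1 + M`; by a Schur complement argument on the block
matrix `[[A, F], [Fᵀ, B⁻¹]]` this means that `A - F B Fᵀ` is positive semidefinite. The
`θ²`-terms of `A` and of `F B Fᵀ` cancel, so `A - F B Fᵀ` is affine in `θ`: it is the convex
combination of its values at `θ = ±1` with weights `(1 ± θ) / 2`, and the positive
semidefinite matrices form a convex cone.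
-/

open Matrix

namespace Matrix

variable {n : Type*} [Fintype n] [DecidableEq n]

omit [DecidableEq n] in
theorem forall_dotProduct_mulVec_le_iff_posSemidef_sub {A B F : Matrix n n ℝ}
    (hA : A.IsHermitian) (hB : B.IsHermitian) :
    (∀ y, (F *ᵥ y) ⬝ᵥ A *ᵥ (F *ᵥ y) ≤ y ⬝ᵥ B *ᵥ y) ↔ (B - Fᵀ * A * F).PosSemidef := by
  have hherm : (B - Fᵀ * A * F).IsHermitian := by
    refine hB.sub ?_
    simpa only [conjTranspose_eq_transpose_of_trivial] using
      isHermitian_conjTranspose_mul_mul F hA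
  have quad (y : n → ℝ) :
      y ⬝ᵥ (B - Fᵀ * A * F) *ᵥ y = y ⬝ᵥ B *ᵥ y - (F *ᵥ y) ⬝ᵥ A *ᵥ (F *ᵥ y) := by
    rw [sub_mulVec, dotProduct_sub, ← mulVec_mulVec, ← mulVec_mulVec, dotProduct_mulVec y Fᵀ,
      vecMul_transpose]
  refine ⟨fun h => .of_dotProduct_mulVec_nonneg hherm fun y => ?_, fun h y => ?_⟩
  · rw [star_trivial, quad y]
    exact sub_nonneg.2 (h y)
  · have := h.dotProduct_mulVec_nonneg y
    rw [star_trivial, quad y] at this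
    exact sub_nonneg.1 this

theorem posSemidef_inv_sub_iff_posSemidef_sub {A B F : Matrix n n ℝ}
    (hA : A.PosDef) (hB : B.PosDef) :
    (B⁻¹ - Fᵀ * A⁻¹ * F).PosSemidef ↔ (A - F * B * Fᵀ).PosSemidef := by
  have : Invertible A := hA.isUnit.invertible
  have : Invertible B⁻¹ := hB.inv.isUnit.invertible
  have h₁₁ := PosDef.fromBlocks₁₁ F B⁻¹ hA
  have h₂₂ := PosDef.fromBlocks₂₂ A F hB.inv
  rw [conjTranspose_eq_transpose_of_trivial] at h₁₁ h₂₂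
  rw [nonsing_inv_nonsing_inv B ((isUnit_iff_isUnit_det B).1 hB.isUnit)] at h₂₂
  exact h₁₁.symm.trans h₂₂

theorem forall_dotProduct_inv_mulVec_le_iff_posSemidef_sub {A B F : Matrix n n ℝ}
    (hA : A.PosDef) (hB : B.PosDef) :
    (∀ y, (F *ᵥ y) ⬝ᵥ A⁻¹ *ᵥ (F *ᵥ y) ≤ y ⬝ᵥ B⁻¹ *ᵥ y) ↔ (A - F * B * Fᵀ).PosSemidef :=
  (forall_dotProduct_mulVec_le_iff_posSemidef_sub hA.inv.1 hB.inv.1).trans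
    (posSemidef_inv_sub_iff_posSemidef_sub hA hB)

theorem posDef_one_add_inv_add_sq_smul {M : Matrix n n ℝ} (hM : M.PosDef) (θ : ℝ) :
    (1 + M⁻¹ + θ ^ 2 • (1 : Matrix n n ℝ) + θ ^ 2 • M).PosDef :=
  ((PosDef.one.add hM.inv).add_posSemidef (PosSemidef.one.smul (sq_nonneg θ))).add_posSemidef
    (hM.posSemidef.smul (sq_nonneg θ))

theorem forall_smul_mulVec_add_mulVec_le_iff_posSemidef_sub {A B C D : Matrix n n ℝ}
    (hA : A.PosDef) (hB : B.PosDef) (hC : IsUnit C.det) (θ : ℝ) :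
    (∀ x, (θ • (C *ᵥ x) + D *ᵥ x) ⬝ᵥ A⁻¹ *ᵥ (θ • (C *ᵥ x) + D *ᵥ x) ≤
        (C *ᵥ x) ⬝ᵥ B⁻¹ *ᵥ (C *ᵥ x)) ↔
      (A - (θ • (1 : Matrix n n ℝ) + D * C⁻¹) * B
        * (θ • (1 : Matrix n n ℝ) + D * C⁻¹)ᵀ).PosSemidef := by
  have hF (x : n → ℝ) :
      θ • (C *ᵥ x) + D *ᵥ x = (θ • (1 : Matrix n n ℝ) + D * C⁻¹) *ᵥ (C *ᵥ x) := by
    rw [add_mulVec, smul_mulVec, one_mulVec, mulVec_mulVec, mul_assoc, nonsing_inv_mul C hC,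
      mul_one]
  simp only [hF]
  rw [← forall_dotProduct_inv_mulVec_le_iff_posSemidef_sub hA hB]
  refine ⟨fun h y => ?_, fun h x => h (C *ᵥ x)⟩
  obtain ⟨x, rfl⟩ := mulVec_surjective_iff_isUnit.2 ((isUnit_iff_isUnit_det C).2 hC) y
  exact h x

theorem sub_mul_mul_transpose_eq_smul_add_smul (M N G : Matrix n n ℝ) (θ : ℝ) :
    (1 + N + θ ^ 2 • (1 : Matrix n n ℝ) + θ ^ 2 • M)
        - (θ • (1 : Matrix n n ℝ) + G) * (1 + M) * (θ • (1 : Matrix n n ℝ) + G)ᵀ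
      = ((1 + θ) / 2) • ((2 : ℝ) • (1 : Matrix n n ℝ) + N + M - (1 + G) * (1 + M) * (1 + G)ᵀ)
        + ((1 - θ) / 2) • ((2 : ℝ) • (1 : Matrix n n ℝ) + N + M
            - (1 - G) * (1 + M) * (1 - G)ᵀ) := by
  simp only [transpose_add, transpose_sub, transpose_smul, transpose_one, add_mul, mul_add,
    sub_mul, mul_sub, smul_mul_assoc, mul_smul_comm, Matrix.one_mul, Matrix.mul_one,
    smul_add, smul_sub, smul_smul]
  module

end Matrix

/-- Equivalence of condition (iv) and the positive semidefiniteness condition (ii)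
in Lemma 4 of the paper. -/
theorem stmt2 {n : ℕ} (C D M : Matrix (Fin n) (Fin n) ℝ)
    (hC : IsUnit C.det) (hM : M.PosDef) :
    (∀ (x : Fin n → ℝ) (θ : ℝ), θ ∈ Set.Icc (-1 : ℝ) 1 →
      (θ • (C *ᵥ x) + D *ᵥ x) ⬝ᵥ
          (1 + M⁻¹ + θ ^ 2 • (1 : Matrix (Fin n) (Fin n) ℝ) + θ ^ 2 • M)⁻¹ *ᵥ
          (θ • (C *ᵥ x) + D *ᵥ x) ≤
        (C *ᵥ x) ⬝ᵥ (1 + M)⁻¹ *ᵥ (C *ᵥ x)) ↔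
    (((2 : ℝ) • (1 : Matrix (Fin n) (Fin n) ℝ) + M⁻¹ + M
        - (1 + D * C⁻¹) * (1 + M) * (1 + D * C⁻¹)ᵀ).PosSemidef ∧
      ((2 : ℝ) • (1 : Matrix (Fin n) (Fin n) ℝ) + M⁻¹ + M
        - (1 - D * C⁻¹) * (1 + M) * (1 - D * C⁻¹)ᵀ).PosSemidef) := by
  have hA (θ : ℝ) := posDef_one_add_inv_add_sq_smul hM θ
  have hB : (1 + M).PosDef := PosDef.one.add hM
  constructor
  · intro h
    have h₁ := (forall_smul_mulVec_add_mulVec_le_iff_posSemidef_sub (hA 1) hB hC 1).1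
      fun x => h x 1 (by norm_num)
    have h₂ := (forall_smul_mulVec_add_mulVec_le_iff_posSemidef_sub (hA (-1)) hB hC (-1)).1
      fun x => h x (-1) (by norm_num)
    rw [sub_mul_mul_transpose_eq_smul_add_smul] at h₁ h₂
    norm_num only [one_smul, zero_smul, add_zero, zero_add] at h₁ h₂
    exact ⟨h₁, h₂⟩
  · rintro ⟨h₁, h₂⟩ x θ ⟨hθ₁, hθ₂⟩
    refine (forall_smul_mulVec_add_mulVec_le_iff_posSemidef_sub (hA θ) hB hC θ).2 ?_ x
    rw [sub_mul_mul_transpose_eq_smul_add_smul]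
    exact (h₁.smul (by linarith)).add (h₂.smul (by linarith))
end

section
/- Under the setup of the Riccati lemma, the scalar minimax identity holds: min_u max_{i∈{−1,1}} { xᵀQx + uᵀRu + (iAx+Bu)ᵀS(iAx+Bu) − 2i⟨A,Y⟩ } = max_{θ∈[−1,1]} { xᵀTx − θ² xᵀ(T−P)x − 2θ⟨A,Y⟩ }, where T = Q+AᵀSA, the maximizing θ is θ̂ = −sat(⟨A,Y⟩ / xᵀ(T−P)x), and the unique minimizing u is û = −θ̂Kx. -/
/-!
Put `M = R + BᵀSB`, `w = Kx`, `c = xᵀ(T - P)x` and `a = ⟨A, Y⟩`. Since `MK = BᵀSA`, the Riccati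
relation for `P` reads `T - P = KᵀMK`, so `c = wᵀMw`, and for `i = ±1` the cost is
`xᵀTx + uᵀMu + 2i(uᵀMw - a)`, which is affine in `i`. For every `θ ∈ [-1, 1]` the maximum over
`i = ±1` therefore dominates the value at `i = θ`, which by completing the square is
`ψ θ + (u + θw)ᵀM(u + θw)`. Taking `θ = θ̂` gives `max ≥ ψ θ̂`, with equality only at
`u = -θ̂w`; equality does hold there because `s = sat (a / c)` satisfies
`|a - sc| = s (a - sc)`. The same property of the projection `sat` makes `θ̂ = -s` the
maximizer of the concave quadratic `ψ` on `[-1, 1]`.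
-/

open Matrix

/-- Saturation: `sat y = y` for `|y| ≤ 1`, `sign y` otherwise. -/
noncomputable def sat (y : ℝ) : ℝ := max (-1) (min 1 y)

theorem sat_mem_Icc (y : ℝ) : sat y ∈ Set.Icc (-1 : ℝ) 1 :=
  ⟨le_max_left _ _, max_le (by norm_num) (min_le_left _ _)⟩

/-- The variational inequality of `sat` as the projection onto `[-1, 1]`. -/
theorem sub_sat_mul_sub_sat_nonpos {θ : ℝ} (hθ : θ ∈ Set.Icc (-1 : ℝ) 1) (y : ℝ) :
    (θ - sat y) * (y - sat y) ≤ 0 := by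
  obtain ⟨hθl, hθr⟩ := hθ
  unfold sat
  rcases le_total y (-1) with hy | hy
  · rw [min_eq_right (by linarith), max_eq_left hy]
    nlinarith
  rcases le_total y 1 with hy' | hy'
  · rw [min_eq_right hy', max_eq_right hy]
    simp
  · rw [min_eq_left hy', max_eq_right (by norm_num)]
    nlinarith

theorem abs_sub_sat (y : ℝ) : |y - sat y| = sat y * (y - sat y) := by
  unfold sat
  rcases le_total y (-1) with hy | hy
  · rw [min_eq_right (by linarith), max_eq_left hy, abs_of_nonpos (by linarith)]
    ring
  rcases le_total y 1 with hy' | hy'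
  · rw [min_eq_right hy', max_eq_right hy]
    simp
  · rw [min_eq_left hy', max_eq_right (by norm_num), abs_of_nonneg (by linarith)]
    ring

theorem mul_le_abs_of_mem_Icc {θ : ℝ} (hθ : θ ∈ Set.Icc (-1 : ℝ) 1) (β : ℝ) : θ * β ≤ |β| := by
  calc θ * β ≤ |θ * β| := le_abs_self _
    _ = |θ| * |β| := abs_mul θ β
    _ ≤ |β| := mul_le_of_le_one_left (abs_nonneg β) (abs_le.mpr hθ)

section QuadraticForm

variable {ι : Type*} [Fintype ι] {M : Matrix ι ι ℝ}

theorem dotProduct_mulVec_comm_of_isSymm (hM : M.IsSymm) (u v : ι → ℝ) :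
    u ⬝ᵥ M *ᵥ v = v ⬝ᵥ M *ᵥ u := by
  rw [← dotProduct_transpose_mulVec, hM.eq]

theorem add_smul_dotProduct_mulVec_add_smul (hM : M.IsSymm) (u w : ι → ℝ) (θ : ℝ) :
    (u + θ • w) ⬝ᵥ M *ᵥ (u + θ • w)
      = u ⬝ᵥ M *ᵥ u + 2 * θ * (u ⬝ᵥ M *ᵥ w) + θ ^ 2 * (w ⬝ᵥ M *ᵥ w) := by
  simp only [mulVec_add, mulVec_smul, dotProduct_add, add_dotProduct, smul_dotProduct,
    dotProduct_smul, smul_eq_mul]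
  rw [dotProduct_mulVec_comm_of_isSymm hM w u]
  ring

theorem dotProduct_transpose_mul_mul_mulVec {κ ν μ : Type*} [Fintype κ] [Fintype ν] [Fintype μ]
    (C : Matrix κ ι ℝ) (N : Matrix κ ν ℝ) (D : Matrix ν μ ℝ) (u : ι → ℝ) (v : μ → ℝ) :
    u ⬝ᵥ (Cᵀ * N * D) *ᵥ v = (C *ᵥ u) ⬝ᵥ N *ᵥ (D *ᵥ v) := by
  rw [← mulVec_mulVec, ← mulVec_mulVec, dotProduct_transpose_mulVec, dotProduct_comm]

end QuadraticForm

theorem neg_sq_mul_sub_two_mul_le_sat {c : ℝ} (hc : 0 < c) (a : ℝ) {θ : ℝ}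
    (hθ : θ ∈ Set.Icc (-1 : ℝ) 1) :
    -(θ ^ 2 * c) - 2 * θ * a ≤ -(sat (a / c) ^ 2 * c) + 2 * sat (a / c) * a := by
  have ha : a = c * (a / c) := (mul_div_cancel₀ a hc.ne').symm
  set s := sat (a / c)
  have hproj : 0 ≤ (θ + s) * (a / c - s) := by
    have := sub_sat_mul_sub_sat_nonpos (θ := -θ) ⟨by linarith [hθ.2], by linarith [hθ.1]⟩ (a / c)
    linarith
  -- the gap is `c (θ + s)² + 2c (θ + s)(a/c - s)`
  rw [ha]
  nlinarith [mul_nonneg hc.le (sq_nonneg (θ + s)), mul_nonneg hc.le hproj]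

theorem sq_mul_add_two_mul_abs_sat_sub {c : ℝ} (hc : 0 < c) (a : ℝ) :
    sat (a / c) ^ 2 * c + 2 * |sat (a / c) * c - a|
      = -(sat (a / c) ^ 2 * c) + 2 * sat (a / c) * a := by
  have hsat := abs_sub_sat (a / c)
  have ha : a = c * (a / c) := (mul_div_cancel₀ a hc.ne').symm
  set s := sat (a / c)
  set y := a / c
  have habs : |s * c - a| = c * (s * (y - s)) := by
    rw [abs_sub_comm, ha, ← hsat, ← abs_of_pos hc, ← abs_mul, abs_of_pos hc]
    congr 1
    ring
  rw [habs]
  linear_combination (-2 * s) * ha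

theorem minimax_saturated_quadratic {ι : Type*} [Fintype ι] {M : Matrix ι ι ℝ} (hM : M.PosDef)
    (w : ι → ℝ) {t a c : ℝ} (hwc : w ⬝ᵥ M *ᵥ w = c) (hc : 0 < c)
    (f : (ι → ℝ) → ℝ → ℝ)
    (hf : ∀ u i, i ^ 2 = 1 → f u i = t + u ⬝ᵥ M *ᵥ u + 2 * i * (u ⬝ᵥ M *ᵥ w - a))
    (g : ℝ → ℝ) (hg : ∀ θ, g θ = t - θ ^ 2 * c - 2 * θ * a)
    (θhat : ℝ) (hθhat : θhat = -sat (a / c)) (uhat : ι → ℝ) (huhat : uhat = -(θhat • w)) :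
    IsGreatest {r : ℝ | ∃ θ ∈ Set.Icc (-1 : ℝ) 1, r = g θ} (g θhat) ∧
    IsLeast {r : ℝ | ∃ u : ι → ℝ, r = max (f u 1) (f u (-1))} (g θhat) ∧
    max (f uhat 1) (f uhat (-1)) = g θhat ∧
    (∀ u : ι → ℝ, max (f u 1) (f u (-1)) = g θhat → u = uhat) := by
  have hs := sat_mem_Icc (a / c)
  have hval := sq_mul_add_two_mul_abs_sat_sub hc a
  set s := sat (a / c)
  have hsym : M.IsSymm := isHermitian_iff_isSymm.mp hM.isHermitian
  have hgθ : g θhat = t - s ^ 2 * c + 2 * s * a := by rw [hg, hθhat]; ring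
  have huhat' : uhat = s • w := by rw [huhat, hθhat, neg_smul, neg_neg]
  have hsq : ∀ u, (u - s • w) ⬝ᵥ M *ᵥ (u - s • w)
      = u ⬝ᵥ M *ᵥ u - 2 * s * (u ⬝ᵥ M *ᵥ w) + s ^ 2 * c := by
    intro u
    rw [sub_eq_add_neg, ← neg_smul, add_smul_dotProduct_mulVec_add_smul hsym, hwc]
    ring
  have hmax : ∀ u, max (f u 1) (f u (-1))
      = t + u ⬝ᵥ M *ᵥ u + 2 * |u ⬝ᵥ M *ᵥ w - a| := by
    intro u
    rw [hf u 1 (one_pow 2), hf u (-1) (by norm_num)]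
    rcases abs_cases (u ⬝ᵥ M *ᵥ w - a) with ⟨h, hnn⟩ | ⟨h, hneg⟩
    · rw [h, max_eq_left (by linarith)]; ring
    · rw [h, max_eq_right (by linarith)]; ring
  have hlow : ∀ u, g θhat + (u - s • w) ⬝ᵥ M *ᵥ (u - s • w) ≤ max (f u 1) (f u (-1)) := by
    intro u
    have hβ := mul_le_abs_of_mem_Icc (θ := -s) ⟨by linarith [hs.2], by linarith [hs.1]⟩
      (u ⬝ᵥ M *ᵥ w - a)
    rw [hmax, hgθ, hsq]
    linarith
  have hmin : max (f uhat 1) (f uhat (-1)) = g θhat := by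
    have hw : (s • w) ⬝ᵥ M *ᵥ w = s * c := by rw [smul_dotProduct, hwc, smul_eq_mul]
    have hww : (s • w) ⬝ᵥ M *ᵥ (s • w) = s ^ 2 * c := by
      rw [mulVec_smul, dotProduct_smul, hw, smul_eq_mul]; ring
    rw [hmax, hgθ, huhat', hw, hww]
    linarith
  refine ⟨⟨⟨θhat, ?_, rfl⟩, ?_⟩, ⟨⟨uhat, hmin.symm⟩, ?_⟩, hmin, ?_⟩
  · rw [hθhat]
    exact ⟨by linarith [hs.2], by linarith [hs.1]⟩
  · rintro r ⟨θ, hθ, rfl⟩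
    rw [hg, hgθ]
    linarith [neg_sq_mul_sub_two_mul_le_sat hc a hθ]
  · rintro r ⟨u, rfl⟩
    have hnn : 0 ≤ (u - s • w) ⬝ᵥ M *ᵥ (u - s • w) := by
      simpa using hM.posSemidef.dotProduct_mulVec_nonneg (u - s • w)
    linarith [hlow u]
  · intro u hu
    have hle := hlow u
    rw [hu, add_le_iff_nonpos_right] at hle
    rw [huhat', ← sub_eq_zero]
    by_contra hne
    have hpos : 0 < (u - s • w) ⬝ᵥ M *ᵥ (u - s • w) := by
      simpa using hM.dotProduct_mulVec_pos hne
    linarith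

section Riccati

variable {ι κ : Type*} [Fintype ι] [Fintype κ]
  {A Q S : Matrix ι ι ℝ} {B : Matrix ι κ ℝ} {R : Matrix κ κ ℝ} {K : Matrix κ ι ℝ}

theorem posDef_add_transpose_mul_mul (hR : R.PosDef) (hS : S.PosDef) :
    (R + Bᵀ * S * B).PosDef :=
  hR.add_posSemidef (by simpa using hS.posSemidef.conjTranspose_mul_mul_same B)

theorem riccati_sub_eq (hR : R.IsSymm) (hS : S.IsSymm) (hK : (R + Bᵀ * S * B) * K = Bᵀ * S * A) :
    Q + Aᵀ * S * A - (Q + Kᵀ * R * K + (A - B * K)ᵀ * S * (A - B * K))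
      = Kᵀ * (R + Bᵀ * S * B) * K := by
  have hKt : Aᵀ * S * B = Kᵀ * (R + Bᵀ * S * B) := by
    have := congrArg transpose hK
    simp only [transpose_mul, transpose_add, transpose_transpose, hR.eq, hS.eq] at this
    simpa [Matrix.mul_assoc] using this.symm
  calc _ = Aᵀ * S * B * K + Kᵀ * (Bᵀ * S * A) - Kᵀ * (R + Bᵀ * S * B) * K := by
        simp only [transpose_sub, transpose_mul, Matrix.sub_mul, Matrix.mul_sub, Matrix.add_mul,
          Matrix.mul_add, Matrix.mul_assoc]
        abel
    _ = _ := by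
        rw [hKt, ← hK]
        simp only [Matrix.mul_assoc]
        abel

theorem riccati_cost_eq (hS : S.IsSymm) (hK : (R + Bᵀ * S * B) * K = Bᵀ * S * A)
    (x : ι → ℝ) (u : κ → ℝ) {i : ℝ} (hi : i ^ 2 = 1) (a : ℝ) :
    x ⬝ᵥ Q *ᵥ x + u ⬝ᵥ R *ᵥ u + (i • (A *ᵥ x) + B *ᵥ u) ⬝ᵥ S *ᵥ (i • (A *ᵥ x) + B *ᵥ u)
        - 2 * i * a
      = x ⬝ᵥ (Q + Aᵀ * S * A) *ᵥ x + u ⬝ᵥ (R + Bᵀ * S * B) *ᵥ u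
        + 2 * i * (u ⬝ᵥ (R + Bᵀ * S * B) *ᵥ (K *ᵥ x) - a) := by
  have hcross : u ⬝ᵥ (R + Bᵀ * S * B) *ᵥ (K *ᵥ x) = (B *ᵥ u) ⬝ᵥ S *ᵥ (A *ᵥ x) := by
    rw [mulVec_mulVec, hK, dotProduct_transpose_mul_mul_mulVec]
  rw [add_comm (i • _), add_smul_dotProduct_mulVec_add_smul hS, hcross, hi]
  simp only [add_mulVec, dotProduct_add, dotProduct_transpose_mul_mul_mulVec]
  ring

end Riccati

theorem stmt7_general {n m : ℕ}
    (A Y : Matrix (Fin n) (Fin n) ℝ) (B : Matrix (Fin n) (Fin m) ℝ)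
    (Q S P : Matrix (Fin n) (Fin n) ℝ) (R : Matrix (Fin m) (Fin m) ℝ)
    (hR : R.PosDef) (hS : S.PosDef)
    (K : Matrix (Fin m) (Fin n) ℝ) (hK : K = (R + Bᵀ * S * B)⁻¹ * Bᵀ * S * A)
    (hPdef : P = Q + Kᵀ * R * K + (A - B * K)ᵀ * S * (A - B * K))
    (T : Matrix (Fin n) (Fin n) ℝ) (hT : T = Q + Aᵀ * S * A)
    (hTP : (T - P).PosDef)
    (x : Fin n → ℝ) (hx : x ≠ 0)
    (φ : (Fin m → ℝ) → ℝ → ℝ)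
    (hφ : ∀ u i, φ u i = x ⬝ᵥ Q *ᵥ x + u ⬝ᵥ R *ᵥ u
        + (i • (A *ᵥ x) + B *ᵥ u) ⬝ᵥ S *ᵥ (i • (A *ᵥ x) + B *ᵥ u)
        - 2 * i * (Aᵀ * Y).trace)
    (ψ : ℝ → ℝ)
    (hψ : ∀ θ, ψ θ = x ⬝ᵥ T *ᵥ x - θ ^ 2 * (x ⬝ᵥ (T - P) *ᵥ x)
        - 2 * θ * (Aᵀ * Y).trace)
    (θhat : ℝ) (hθhat : θhat = -sat ((Aᵀ * Y).trace / (x ⬝ᵥ (T - P) *ᵥ x)))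
    (uhat : Fin m → ℝ) (huhat : uhat = -(θhat • (K *ᵥ x))) :
    IsGreatest {r : ℝ | ∃ θ ∈ Set.Icc (-1 : ℝ) 1, r = ψ θ} (ψ θhat) ∧
    IsLeast {r : ℝ | ∃ u : Fin m → ℝ, r = max (φ u 1) (φ u (-1))} (ψ θhat) ∧
    max (φ uhat 1) (φ uhat (-1)) = ψ θhat ∧
    (∀ u : Fin m → ℝ, max (φ u 1) (φ u (-1)) = ψ θhat → u = uhat) := by
  have hRsymm : R.IsSymm := isHermitian_iff_isSymm.mp hR.isHermitian
  have hSsymm : S.IsSymm := isHermitian_iff_isSymm.mp hS.isHermitian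
  have hM : (R + Bᵀ * S * B).PosDef := posDef_add_transpose_mul_mul hR hS
  have hMK : (R + Bᵀ * S * B) * K = Bᵀ * S * A := by
    simpa only [hK, Matrix.mul_assoc] using
      mul_nonsing_inv_cancel_left _ (Bᵀ * S * A) hM.det_pos.ne'.isUnit
  have hwc : (K *ᵥ x) ⬝ᵥ (R + Bᵀ * S * B) *ᵥ (K *ᵥ x) = x ⬝ᵥ (T - P) *ᵥ x := by
    rw [hT, hPdef, riccati_sub_eq hRsymm hSsymm hMK,
      dotProduct_transpose_mul_mul_mulVec]
  have hc : 0 < x ⬝ᵥ (T - P) *ᵥ x := by simpa using hTP.dotProduct_mulVec_pos hx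
  exact minimax_saturated_quadratic hM (K *ᵥ x) hwc hc φ
    (fun u i hi ↦ by rw [hφ, riccati_cost_eq hSsymm hMK x u hi, ← hT]) ψ hψ θhat hθhat uhat huhat

/-- Lemma 2 of the paper: the scalar minimax identity
`min_u max_{i=±1} {xᵀQx + uᵀRu + |iAx+Bu|²_S − 2i⟨A,Y⟩}
  = max_{θ∈[−1,1]} {xᵀTx − θ²xᵀ(T−P)x − 2θ⟨A,Y⟩}`,
with maximizing `θ̂ = −sat(⟨A,Y⟩/xᵀ(T−P)x)` and unique minimizer `û = −θ̂Kx`. -/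
theorem stmt7 {n m : ℕ}
    (A Y : Matrix (Fin n) (Fin n) ℝ) (B : Matrix (Fin n) (Fin m) ℝ)
    (Q S P : Matrix (Fin n) (Fin n) ℝ) (R : Matrix (Fin m) (Fin m) ℝ)
    (hQ : Q.PosDef) (hR : R.PosDef) (hS : S.PosDef) (hP : P.PosDef)
    (K : Matrix (Fin m) (Fin n) ℝ) (hK : K = (R + Bᵀ * S * B)⁻¹ * Bᵀ * S * A)
    (hPdef : P = Q + Kᵀ * R * K + (A - B * K)ᵀ * S * (A - B * K))
    (T : Matrix (Fin n) (Fin n) ℝ) (hT : T = Q + Aᵀ * S * A)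
    (hTP : (T - P).PosDef)
    (x : Fin n → ℝ) (hx : x ≠ 0)
    (φ : (Fin m → ℝ) → ℝ → ℝ)
    (hφ : ∀ u i, φ u i = x ⬝ᵥ Q *ᵥ x + u ⬝ᵥ R *ᵥ u
        + (i • (A *ᵥ x) + B *ᵥ u) ⬝ᵥ S *ᵥ (i • (A *ᵥ x) + B *ᵥ u)
        - 2 * i * (Aᵀ * Y).trace)
    (ψ : ℝ → ℝ)
    (hψ : ∀ θ, ψ θ = x ⬝ᵥ T *ᵥ x - θ ^ 2 * (x ⬝ᵥ (T - P) *ᵥ x)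
        - 2 * θ * (Aᵀ * Y).trace)
    (θhat : ℝ) (hθhat : θhat = -sat ((Aᵀ * Y).trace / (x ⬝ᵥ (T - P) *ᵥ x)))
    (uhat : Fin m → ℝ) (huhat : uhat = -(θhat • (K *ᵥ x))) :
    IsGreatest {r : ℝ | ∃ θ ∈ Set.Icc (-1 : ℝ) 1, r = ψ θ} (ψ θhat) ∧
    IsLeast {r : ℝ | ∃ u : Fin m → ℝ, r = max (φ u 1) (φ u (-1))} (ψ θhat) ∧
    max (φ uhat 1) (φ uhat (-1)) = ψ θhat ∧
    (∀ u : Fin m → ℝ, max (φ u 1) (φ u (-1)) = ψ θhat → u = uhat) :=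
  stmt7_general A Y B Q S P R hR hS K hK hPdef T hT hTP x hx φ hφ ψ hψ θhat hθhat uhat huhat
end

section
/- Let γ > 0, T, P symmetric with P ≺ T ≺ γ²I, and M := (γ²I−T)^{−1/2}(T−P)(γ²I−T)^{−1/2}. Then (γ²I−T)^{1/2}(2I + M + M⁻¹)(γ²I−T)^{1/2} = (γ²I−P)(T−P)⁻¹(γ²I−P). -/
open Matrix

section

open scoped ComplexOrder

/-- The positive semidefinite square root of a positive semidefinite matrix
(the definition Mathlib had in December 2024, since removed). -/
noncomputable def Matrix.PosSemidef.sqrt {n 𝕜 : Type*} [Fintype n] [RCLike 𝕜] [DecidableEq n]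
    {A : Matrix n n 𝕜} (hA : A.PosSemidef) : Matrix n n 𝕜 :=
  hA.1.eigenvectorUnitary.1 * diagonal ((↑) ∘ (Real.sqrt ∘ hA.1.eigenvalues)) *
    (star hA.1.eigenvectorUnitary : Matrix n n 𝕜)

end

/-!
Write `S = (γ²I − T)^{1/2}` and `B = T − P`, so `M = S⁻¹ B S⁻¹` and `M⁻¹ = S B⁻¹ S`. Conjugating by `S`
gives `S (2I + M + M⁻¹) S = 2S² + B + S² B⁻¹ S²`, which is the expansion of `(S² + B) B⁻¹ (S² + B)`;
and `S² + B = γ²I − P`.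
-/

open scoped ComplexOrder in
theorem Matrix.PosSemidef.sqrt_mul_self {n 𝕜 : Type*} [Fintype n] [RCLike 𝕜] [DecidableEq n]
    {A : Matrix n n 𝕜} (hA : A.PosSemidef) : hA.sqrt * hA.sqrt = A := by
  set U : Matrix n n 𝕜 := hA.1.eigenvectorUnitary.1
  set D : Matrix n n 𝕜 := diagonal (RCLike.ofReal ∘ Real.sqrt ∘ hA.1.eigenvalues)
  have hU : star U * U = 1 := Unitary.star_mul_self_of_mem hA.1.eigenvectorUnitary.2
  have hD : D * D = diagonal (RCLike.ofReal ∘ hA.1.eigenvalues) := by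
    simp only [D, diagonal_mul_diagonal, Function.comp_apply, ← RCLike.ofReal_mul,
      Real.mul_self_sqrt (hA.eigenvalues_nonneg _)]
    rfl
  calc hA.sqrt * hA.sqrt = U * D * (star U * U) * D * star U := by
        simp only [Matrix.PosSemidef.sqrt, mul_assoc]; rfl
    _ = U * diagonal (RCLike.ofReal ∘ hA.1.eigenvalues) * star U := by
        rw [hU, mul_one, mul_assoc U D D, hD]
    _ = A := by
        conv_rhs => rw [hA.1.spectral_theorem, Unitary.conjStarAlgAut_apply]

namespace Matrix

variable {n R : Type*} [Fintype n] [DecidableEq n] [CommRing R]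

theorem inv_inv_mul_mul_inv {S B : Matrix n n R} (hS : IsUnit S.det) :
    (S⁻¹ * B * S⁻¹)⁻¹ = S * B⁻¹ * S := by
  rw [mul_inv_rev, mul_inv_rev, nonsing_inv_nonsing_inv _ hS, mul_assoc]

theorem add_mul_inv_mul_add {A B : Matrix n n R} (hB : IsUnit B.det) :
    (A + B) * B⁻¹ * (A + B) = (2 : R) • A + B + A * B⁻¹ * A := by
  simp only [add_mul, mul_add, mul_assoc, mul_nonsing_inv _ hB, nonsing_inv_mul _ hB, mul_one, one_mul]
  module

theorem mul_two_add_add_inv_mul_eq {S B : Matrix n n R} (hS : IsUnit S.det) (hB : IsUnit B.det) :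
    S * ((2 : R) • 1 + S⁻¹ * B * S⁻¹ + (S⁻¹ * B * S⁻¹)⁻¹) * S = (S * S + B) * B⁻¹ * (S * S + B) := by
  rw [inv_inv_mul_mul_inv hS, add_mul_inv_mul_add hB]
  simp only [mul_add, add_mul, mul_smul_comm, smul_mul_assoc, mul_one, mul_assoc,
    nonsing_inv_mul _ hS, mul_nonsing_inv_cancel_left _ _ hS]

end Matrix

theorem stmt12_general {n : ℕ} (γ : ℝ)
    (T P : Matrix (Fin n) (Fin n) ℝ)
    (hTP : (T - P).PosDef)
    (hγT : (γ ^ 2 • (1 : Matrix (Fin n) (Fin n) ℝ) - T).PosDef)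
    (M : Matrix (Fin n) (Fin n) ℝ)
    (hM : M = (hγT.posSemidef.sqrt)⁻¹ * (T - P) * (hγT.posSemidef.sqrt)⁻¹) :
    hγT.posSemidef.sqrt * ((2 : ℝ) • (1 : Matrix (Fin n) (Fin n) ℝ) + M + M⁻¹) *
        hγT.posSemidef.sqrt =
      (γ ^ 2 • (1 : Matrix (Fin n) (Fin n) ℝ) - P) * (T - P)⁻¹ *
        (γ ^ 2 • (1 : Matrix (Fin n) (Fin n) ℝ) - P) := by
  set S := hγT.posSemidef.sqrt
  have hSS : S * S = γ ^ 2 • 1 - T := hγT.posSemidef.sqrt_mul_self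
  have hS : IsUnit S.det :=
    (isUnit_iff_isUnit_det S).mp (isUnit_of_mul_isUnit_left (hSS ▸ hγT.isUnit))
  have hP : γ ^ 2 • 1 - P = S * S + (T - P) := by rw [hSS]; abel
  rw [hM, hP, mul_two_add_add_inv_mul_eq hS ((isUnit_iff_isUnit_det _).mp hTP.isUnit)]

/-- With `M = (γ²I−T)^{−1/2}(T−P)(γ²I−T)^{−1/2}`:
`(γ²I−T)^{1/2}(2I + M + M⁻¹)(γ²I−T)^{1/2} = (γ²I−P)(T−P)⁻¹(γ²I−P)`. -/
theorem stmt12 {n : ℕ} (γ : ℝ) (hγ : 0 < γ)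
    (T P : Matrix (Fin n) (Fin n) ℝ) (hTs : T.IsSymm) (hPs : P.IsSymm)
    (hTP : (T - P).PosDef)
    (hγT : (γ ^ 2 • (1 : Matrix (Fin n) (Fin n) ℝ) - T).PosDef)
    (M : Matrix (Fin n) (Fin n) ℝ)
    (hM : M = (hγT.posSemidef.sqrt)⁻¹ * (T - P) * (hγT.posSemidef.sqrt)⁻¹) :
    hγT.posSemidef.sqrt * ((2 : ℝ) • (1 : Matrix (Fin n) (Fin n) ℝ) + M + M⁻¹) *
        hγT.posSemidef.sqrt =
      (γ ^ 2 • (1 : Matrix (Fin n) (Fin n) ℝ) - P) * (T - P)⁻¹ *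
        (γ ^ 2 • (1 : Matrix (Fin n) (Fin n) ℝ) - P) :=
  stmt12_general γ T P hTP hγT M hM
end

section
/- The candidate value functions V⁺(x,Z) := xᵀP_k x − γ² trace([I A] Z [I A]ᵀ) satisfy ℱV⁺_{k} = V⁺_{k+1}, where P_{k+1} is given by the H∞ Riccati recursion xᵀP_{k+1}x = min_u max_v { xᵀQx + uᵀRu − γ²|Ax+Bu−v|² + vᵀP_k v }; i.e., applying the Bellman operator to the 'known-sign' quadratic candidate reproduces the standard H∞ Riccati iteration, with the −γ² trace([I A]Z[I A]ᵀ) term absorbing the rank-one data update exactly. -/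
open Matrix

/-! The rank-one data update raises `trace([I A] Z [I A]ᵀ)` by exactly `|Ax + Bu − v|²`, so
the Bellman integrand for `V⁺_k` is the Riccati integrand minus the constant
`γ² trace([I A] Z [I A]ᵀ)`, and a constant shift passes through the min–max. -/

def IsMinMax {α β : Type*} (g : α → β → ℝ) (p : ℝ) : Prop :=
  IsLeast {r : ℝ | ∃ u : α, IsGreatest {s : ℝ | ∃ v : β, s = g u v} r} p

theorem isGreatest_setOf_sub_const_iff {β : Type*} (f : β → ℝ) (c r : ℝ) :
    IsGreatest {s : ℝ | ∃ v, s = f v - c} r ↔ IsGreatest {s : ℝ | ∃ v, s = f v} (r + c) := by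
  constructor
  · rintro ⟨⟨v, hv⟩, hub⟩
    refine ⟨⟨v, by linarith⟩, ?_⟩
    rintro s ⟨w, rfl⟩
    linarith [hub ⟨w, rfl⟩]
  · rintro ⟨⟨v, hv⟩, hub⟩
    refine ⟨⟨v, by linarith⟩, ?_⟩
    rintro s ⟨w, rfl⟩
    linarith [hub ⟨w, rfl⟩]

theorem IsMinMax.of_eq_sub_const {α β : Type*} {g f : α → β → ℝ} {p : ℝ} (h : IsMinMax g p)
    (c : ℝ) (hf : ∀ u v, f u v = g u v - c) : IsMinMax f (p - c) := by
  simp only [IsMinMax, hf, isGreatest_setOf_sub_const_iff] at h ⊢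
  obtain ⟨⟨u, hu⟩, hlb⟩ := h
  refine ⟨⟨u, by rwa [sub_add_cancel]⟩, ?_⟩
  rintro r ⟨w, hw⟩
  linarith [hlb ⟨w, hw⟩]

theorem trace_mul_vecMulVec_mul_transpose {R k l : Type*} [CommSemiring R] [Fintype k]
    [Fintype l] (F : Matrix k l R) (w : l → R) :
    (F * vecMulVec w w * Fᵀ).trace = (F *ᵥ w) ⬝ᵥ (F *ᵥ w) := by
  rw [mul_vecMulVec, vecMulVec_mul, vecMul_transpose, trace_vecMulVec]

theorem trace_mul_add_vecMulVec_mul_transpose {R k l : Type*} [CommSemiring R] [Fintype k]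
    [Fintype l] (F : Matrix k l R) (Z : Matrix l l R) (w : l → R) :
    (F * (Z + vecMulVec w w) * Fᵀ).trace = (F * Z * Fᵀ).trace + (F *ᵥ w) ⬝ᵥ (F *ᵥ w) := by
  rw [Matrix.mul_add, Matrix.add_mul, trace_add, trace_mul_vecMulVec_mul_transpose]

theorem fromCols_one_mulVec_sumElim {R k l : Type*} [CommRing R] [Fintype k] [DecidableEq k]
    [Fintype l] (A : Matrix k k R) (B : Matrix k l R) (x v : k → R) (u : l → R) :
    fromCols (1 : Matrix k k R) A *ᵥ Sum.elim (B *ᵥ u - v) x = A *ᵥ x + B *ᵥ u - v := by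
  rw [fromCols_mulVec_sumElim, one_mulVec]
  abel

theorem stmt19_general {n m : ℕ} (γ : ℝ)
    (A : Matrix (Fin n) (Fin n) ℝ) (B : Matrix (Fin n) (Fin m) ℝ)
    (Q : Matrix (Fin n) (Fin n) ℝ) (R : Matrix (Fin m) (Fin m) ℝ)
    (Pk Pk1 : Matrix (Fin n) (Fin n) ℝ)
    (hRic : ∀ x : Fin n → ℝ,
      IsLeast {r : ℝ | ∃ u : Fin m → ℝ,
          IsGreatest {s : ℝ | ∃ v : Fin n → ℝ,
              s = x ⬝ᵥ Q *ᵥ x + u ⬝ᵥ R *ᵥ u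
                - γ ^ 2 * ((A *ᵥ x + B *ᵥ u - v) ⬝ᵥ (A *ᵥ x + B *ᵥ u - v))
                + v ⬝ᵥ Pk *ᵥ v} r}
        (x ⬝ᵥ Pk1 *ᵥ x))
    (Vk Vk1 : (Fin n → ℝ) → Matrix (Fin n ⊕ Fin n) (Fin n ⊕ Fin n) ℝ → ℝ)
    (hVk : ∀ x Z, Vk x Z = x ⬝ᵥ Pk *ᵥ x
      - γ ^ 2 * (fromCols (1 : Matrix (Fin n) (Fin n) ℝ) A * Z *
          (fromCols (1 : Matrix (Fin n) (Fin n) ℝ) A)ᵀ).trace)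
    (hVk1 : ∀ x Z, Vk1 x Z = x ⬝ᵥ Pk1 *ᵥ x
      - γ ^ 2 * (fromCols (1 : Matrix (Fin n) (Fin n) ℝ) A * Z *
          (fromCols (1 : Matrix (Fin n) (Fin n) ℝ) A)ᵀ).trace) :
    ∀ (x : Fin n → ℝ) (Z : Matrix (Fin n ⊕ Fin n) (Fin n ⊕ Fin n) ℝ),
      IsLeast {r : ℝ | ∃ u : Fin m → ℝ,
          IsGreatest {s : ℝ | ∃ v : Fin n → ℝ,
              s = x ⬝ᵥ Q *ᵥ x + u ⬝ᵥ R *ᵥ u +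
                Vk v (Z + vecMulVec (Sum.elim (B *ᵥ u - v) x)
                  (Sum.elim (B *ᵥ u - v) x))} r}
        (Vk1 x Z) := by
  intro x Z
  rw [hVk1]
  refine IsMinMax.of_eq_sub_const (hRic x) _ fun u v => ?_
  rw [hVk, trace_mul_add_vecMulVec_mul_transpose, fromCols_one_mulVec_sumElim]
  ring

/-- Applying the Bellman operator to the "known-sign" quadratic candidate
`V⁺_k(x,Z) = xᵀP_k x − γ² trace([I A] Z [I A]ᵀ)` reproduces the standard H∞
Riccati iteration: `ℱ V⁺_k = V⁺_{k+1}` where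
`xᵀP_{k+1}x = min_u max_v { xᵀQx + uᵀRu − γ²|Ax+Bu−v|² + vᵀP_k v }`. -/
theorem stmt19 {n m : ℕ} (γ : ℝ) (hγ : 0 < γ)
    (A : Matrix (Fin n) (Fin n) ℝ) (B : Matrix (Fin n) (Fin m) ℝ)
    (Q : Matrix (Fin n) (Fin n) ℝ) (R : Matrix (Fin m) (Fin m) ℝ)
    (hQ : Q.PosDef) (hR : R.PosDef)
    (Pk Pk1 : Matrix (Fin n) (Fin n) ℝ)
    (hPk : Pk.PosSemidef)
    (hPkγ : (γ ^ 2 • (1 : Matrix (Fin n) (Fin n) ℝ) - Pk).PosDef)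
    (hPk1s : Pk1.IsSymm)
    (hRic : ∀ x : Fin n → ℝ,
      IsLeast {r : ℝ | ∃ u : Fin m → ℝ,
          IsGreatest {s : ℝ | ∃ v : Fin n → ℝ,
              s = x ⬝ᵥ Q *ᵥ x + u ⬝ᵥ R *ᵥ u
                - γ ^ 2 * ((A *ᵥ x + B *ᵥ u - v) ⬝ᵥ (A *ᵥ x + B *ᵥ u - v))
                + v ⬝ᵥ Pk *ᵥ v} r}
        (x ⬝ᵥ Pk1 *ᵥ x))
    (Vk Vk1 : (Fin n → ℝ) → Matrix (Fin n ⊕ Fin n) (Fin n ⊕ Fin n) ℝ → ℝ)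
    (hVk : ∀ x Z, Vk x Z = x ⬝ᵥ Pk *ᵥ x
      - γ ^ 2 * (fromCols (1 : Matrix (Fin n) (Fin n) ℝ) A * Z *
          (fromCols (1 : Matrix (Fin n) (Fin n) ℝ) A)ᵀ).trace)
    (hVk1 : ∀ x Z, Vk1 x Z = x ⬝ᵥ Pk1 *ᵥ x
      - γ ^ 2 * (fromCols (1 : Matrix (Fin n) (Fin n) ℝ) A * Z *
          (fromCols (1 : Matrix (Fin n) (Fin n) ℝ) A)ᵀ).trace) :
    ∀ (x : Fin n → ℝ) (Z : Matrix (Fin n ⊕ Fin n) (Fin n ⊕ Fin n) ℝ),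
      IsLeast {r : ℝ | ∃ u : Fin m → ℝ,
          IsGreatest {s : ℝ | ∃ v : Fin n → ℝ,
              s = x ⬝ᵥ Q *ᵥ x + u ⬝ᵥ R *ᵥ u +
                Vk v (Z + vecMulVec (Sum.elim (B *ᵥ u - v) x)
                  (Sum.elim (B *ᵥ u - v) x))} r}
        (Vk1 x Z) :=
  stmt19_general γ A B Q R Pk Pk1 hRic Vk Vk1 hVk hVk1
end
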